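/- arXiv:1107.5862 — 2 statements merged into one kernel-verified Lean document; each statement's English description precedes it below -/
import Mathlib

section
/- Let N ≥ 3 be an integer and let i, j, k be three pairwise distinct indices in {1,…,N}. If v ∈ ℝ^N satisfies b_N(v, α_i) = 0, b_N(v, α_j) = 0, b_N(v, α_k) = 0 and b_N(v, v) = 0, then v = 0. (The faces of codimension ≥ 3 of the cone D_N do not meet the isotropic cone of b_N outside the origin.) -/
open Matrix

/-- The matrix `M_{N,j}`: identity except in the `j`-th column, whose `j`-th entry
is `-1` and whose other entries are all `2`. -/
noncomputable def Mmat (N : ℕ) (j : Fin N) : Matrix (Fin N) (Fin N) ℝ :=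
  Matrix.of fun i k => if k = j then (if i = j then -1 else 2) else (if i = k then 1 else 0)

/-- The matrix `B_N`: diagonal entries `-1`, off-diagonal entries `1`. -/
noncomputable def Bmat (N : ℕ) : Matrix (Fin N) (Fin N) ℝ :=
  Matrix.of fun i k => if i = k then -1 else 1

/-- The symmetric bilinear form `b_N(v,w) = vᵗ B_N w` on `ℝ^N`. -/
noncomputable def bform (N : ℕ) (v w : Fin N → ℝ) : ℝ := v ⬝ᵥ (Bmat N).mulVec w

/-- The subgroup of `GL_N(ℝ)` generated by the transposed matrices `M_{N,j}ᵗ`. -/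
noncomputable def Ggrp (N : ℕ) : Subgroup (GL (Fin N) ℝ) :=
  Subgroup.closure {g | ∃ j : Fin N, (g : Matrix (Fin N) (Fin N) ℝ) = (Mmat N j)ᵀ}

/-- The fundamental cone `D_N = {w : b_N(w, α_i) ≥ 0 for all i}`. -/
def Dcone (N : ℕ) : Set (Fin N → ℝ) := {w | ∀ i : Fin N, 0 ≤ bform N w (Pi.single i 1)}

/-- The Tits cone `T_N = ⋃_{g ∈ G_N} g (D_N)`. -/
def Tcone (N : ℕ) : Set (Fin N → ℝ) :=
  {v | ∃ g ∈ Ggrp N, ∃ w ∈ Dcone N, v = (g : Matrix (Fin N) (Fin N) ℝ).mulVec w}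

/-- The vector `c_j = u_N - (N-2) α_j`: coordinates `1` except the `j`-th which is `-(N-3)`. -/
noncomputable def cvec (N : ℕ) (j : Fin N) : Fin N → ℝ :=
  fun i => if i = j then -((N : ℝ) - 3) else 1

/-- The integral matrix `M_{N,j}`. -/
def MmatZ (N : ℕ) (j : Fin N) : Matrix (Fin N) (Fin N) ℤ :=
  Matrix.of fun i k => if k = j then (if i = j then -1 else 2) else (if i = k then 1 else 0)

/-- The integral matrix `B_N`. -/
def BmatZ (N : ℕ) : Matrix (Fin N) (Fin N) ℤ :=
  Matrix.of fun i k => if i = k then -1 else 1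

/-- The bilinear form `b_N` on `ℤ^N`. -/
def bformZ (N : ℕ) (v w : Fin N → ℤ) : ℤ := v ⬝ᵥ (BmatZ N).mulVec w

lemma Bmat_transpose (N : ℕ) : (Bmat N)ᵀ = Bmat N := by
  ext a b
  simp only [Bmat, transpose_apply, of_apply, eq_comm]

lemma Bmat_mulVec_apply (N : ℕ) (v : Fin N → ℝ) (l : Fin N) :
    (Bmat N *ᵥ v) l = ∑ x, v x - 2 * v l := by
  have hentry : ∀ x, (if l = x then (-1 : ℝ) else 1) * v x
      = v x - 2 * (if l = x then v x else 0) := fun x => by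
    split_ifs <;> ring
  simp only [Bmat, mulVec, dotProduct, of_apply, hentry, Finset.sum_sub_distrib,
    ← Finset.mul_sum, Finset.sum_ite_eq, Finset.mem_univ, if_true]

lemma bform_single_right (N : ℕ) (v : Fin N → ℝ) (i : Fin N) :
    bform N v (Pi.single i 1) = ∑ l, v l - 2 * v i := by
  rw [bform, dotProduct_mulVec, dotProduct_single, mul_one, ← Bmat_transpose, vecMul_transpose,
    Bmat_mulVec_apply]

lemma bform_self (N : ℕ) (v : Fin N → ℝ) :
    bform N v v = (∑ l, v l) ^ 2 - 2 * ∑ l, v l ^ 2 := by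
  have hdiag : ∀ l, v l * (2 * v l) = 2 * v l ^ 2 := fun l => by ring
  simp only [bform, dotProduct, Bmat_mulVec_apply, mul_sub, Finset.sum_sub_distrib,
    ← Finset.sum_mul, hdiag, ← Finset.mul_sum]
  ring

lemma sq_add_sq_add_sq_le_sum_sq {ι : Type*} [Fintype ι] (v : ι → ℝ) {i j k : ι}
    (hij : i ≠ j) (hik : i ≠ k) (hjk : j ≠ k) :
    v i ^ 2 + v j ^ 2 + v k ^ 2 ≤ ∑ l, v l ^ 2 := by
  classical
  calc v i ^ 2 + v j ^ 2 + v k ^ 2 = ∑ l ∈ {i, j, k}, v l ^ 2 := by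
        rw [Finset.sum_insert (by simp [hij, hik]), Finset.sum_pair hjk, add_assoc]
    _ ≤ ∑ l, v l ^ 2 :=
        Finset.sum_le_sum_of_subset_of_nonneg (Finset.subset_univ _) fun l _ _ => sq_nonneg _

/-- If three coordinates each carry half of the total sum `S`, they already contribute
`3 S² / 4` to `∑ vₗ²`, which is incompatible with `S² = 2 ∑ vₗ²` unless `S = 0`. -/
lemma eq_zero_of_sq_sum_eq_two_mul_sum_sq {ι : Type*} [Fintype ι] (v : ι → ℝ)
    {i j k : ι} (hij : i ≠ j) (hik : i ≠ k) (hjk : j ≠ k)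
    (hi : 2 * v i = ∑ l, v l) (hj : 2 * v j = ∑ l, v l) (hk : 2 * v k = ∑ l, v l)
    (hsq : (∑ l, v l) ^ 2 = 2 * ∑ l, v l ^ 2) : v = 0 := by
  have hthree := sq_add_sq_add_sq_le_sum_sq v hij hik hjk
  have hsum : ∑ l, v l = 0 := by nlinarith
  have hsum_sq : ∑ l, v l ^ 2 = 0 := by nlinarith
  funext l
  exact pow_eq_zero_iff two_ne_zero |>.mp <|
    (Finset.sum_eq_zero_iff_of_nonneg fun l _ => sq_nonneg (v l)).mp hsum_sq l (Finset.mem_univ l)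

theorem stmt7_general (N : ℕ) (i j k : Fin N)
    (hij : i ≠ j) (hik : i ≠ k) (hjk : j ≠ k) (v : Fin N → ℝ)
    (h1 : bform N v (Pi.single i 1) = 0) (h2 : bform N v (Pi.single j 1) = 0)
    (h3 : bform N v (Pi.single k 1) = 0) (h4 : bform N v v = 0) :
    v = 0 := by
  rw [bform_single_right] at h1 h2 h3
  rw [bform_self] at h4
  exact eq_zero_of_sq_sum_eq_two_mul_sum_sq v hij hik hjk
    (by linarith) (by linarith) (by linarith) (by linarith)

/-- A `b_N`-isotropic vector orthogonal to three pairwise distinct basis vectors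
`α_i, α_j, α_k` is zero. -/
theorem stmt7 (N : ℕ) (hN : 3 ≤ N) (i j k : Fin N)
    (hij : i ≠ j) (hik : i ≠ k) (hjk : j ≠ k) (v : Fin N → ℝ)
    (h1 : bform N v (Pi.single i 1) = 0) (h2 : bform N v (Pi.single j 1) = 0)
    (h3 : bform N v (Pi.single k 1) = 0) (h4 : bform N v v = 0) :
    v = 0 :=
  stmt7_general N i j k hij hik hjk v h1 h2 h3 h4
end

section
/- Let N ≥ 3 be an integer and let a ∈ ℤ^N satisfy b_N(a,a) = 0. Then there exists a matrix g in the subgroup of GL_N(ℝ) generated by the transposed matrices M_{N,j}ᵗ (1 ≤ j ≤ N) such that the vector g·a has at least one coordinate ≤ 0. -/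
/-
Since `b_N(v, v) = (∑ vᵢ)² - 2 ∑ vᵢ²`, the matrix `M_{N,j}ᵗ` acts by the involution replacing
`v_j` with `2 ∑ vᵢ - 3 v_j`, which preserves this quadratic form. If an isotropic integral vector
has only positive coordinates, replacing its largest coordinate `a_j` lowers the coordinate sum
`S` by `4 a_j - 2 S > 0`: isotropy gives `S ≤ 2 a_j`, and equality would force all coordinates to
be equal, so that `S = N a_j > 2 a_j` as `N ≥ 3`. The descent on `S` has to stop at a vector
with a non-positive coordinate.
-/
open Matrix

section Reflection

variable {ι R : Type*} [Fintype ι] [DecidableEq ι] [CommRing R]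

theorem Fintype.sum_update {M : Type*} [AddCommGroup M] (f : ι → M) (i : ι) (b : M) :
    ∑ x, Function.update f i b x = ∑ x, f x - f i + b := by
  rw [Finset.sum_update_of_mem (Finset.mem_univ i), Finset.sdiff_singleton_eq_erase,
    Finset.sum_erase_eq_sub (Finset.mem_univ i)]
  abel

def reflect (j : ι) (v : ι → R) : ι → R := Function.update v j (2 * ∑ i, v i - 3 * v j)

def bquad (v : ι → R) : R := (∑ i, v i) ^ 2 - 2 * ∑ i, v i ^ 2

theorem sum_reflect (j : ι) (v : ι → R) : ∑ i, reflect j v i = 3 * ∑ i, v i - 4 * v j := by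
  rw [reflect, Fintype.sum_update]
  ring

theorem reflect_reflect (j : ι) (v : ι → R) : reflect j (reflect j v) = v := by
  ext k
  rcases eq_or_ne k j with rfl | hk
  · rw [reflect, Function.update_self, sum_reflect, reflect, Function.update_self]
    ring
  · simp only [reflect, Function.update_of_ne hk]

theorem bquad_reflect (j : ι) (v : ι → R) : bquad (reflect j v) = bquad v := by
  have hsq : ∑ i, reflect j v i ^ 2 = ∑ i, v i ^ 2 - v j ^ 2 + (2 * ∑ i, v i - 3 * v j) ^ 2 :=
    (Finset.sum_congr rfl fun i _ => Function.apply_update (fun _ x => x ^ 2) v j _ i).trans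
      (Fintype.sum_update _ _ _)
  rw [bquad, sum_reflect, hsq, bquad]
  ring

theorem reflect_comp_ringHom {S : Type*} [CommRing S] (f : R →+* S) (j : ι) (v : ι → R) :
    reflect j (f ∘ v) = f ∘ reflect j v := by
  ext k
  rcases eq_or_ne k j with rfl | hk
  · simp [reflect, map_sum, map_ofNat]
  · simp [reflect, Function.update_of_ne hk]

theorem sum_reflect_lt_sum (hcard : 3 ≤ Fintype.card ι)
    {a : ι → ℤ} (hpos : ∀ i, 0 < a i) (hiso : bquad a = 0) {j : ι} (hmax : ∀ i, a i ≤ a j) :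
    ∑ i, reflect j a i < ∑ i, a i := by
  set S := ∑ i, a i
  suffices S < 2 * a j by rw [sum_reflect]; linarith
  have hterm : ∀ i ∈ Finset.univ, 0 ≤ a i * (a j - a i) := fun i _ =>
    mul_nonneg (hpos i).le (sub_nonneg.mpr (hmax i))
  -- isotropy, `S ^ 2 = 2 ∑ a_i ^ 2`, makes `S (2 a_j - S)` twice a sum of nonnegative terms
  have hkey : S * (2 * a j - S) = 2 * ∑ i, a i * (a j - a i) := by
    simp only [bquad] at hiso
    simp only [mul_sub, Finset.sum_sub_distrib, ← Finset.sum_mul, ← sq]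
    linear_combination -hiso
  have hS : 0 < S := Finset.sum_pos (fun i _ => hpos i) ⟨j, Finset.mem_univ j⟩
  by_contra! hge
  have hconst : ∀ i, a i = a j := fun i => by
    have hzero := (Finset.sum_eq_zero_iff_of_nonneg hterm).mp
      (by nlinarith [Finset.sum_nonneg hterm]) i (Finset.mem_univ i)
    nlinarith [hpos i, hmax i]
  have hSconst : S = Fintype.card ι * a j := by simp [S, hconst]
  have hcard' : (3 : ℤ) ≤ Fintype.card ι := by exact_mod_cast hcard
  nlinarith [hpos j, Finset.sum_nonneg hterm]

end Reflection

theorem BmatZ_mulVec (N : ℕ) (v : Fin N → ℤ) : BmatZ N *ᵥ v = fun i => ∑ k, v k - 2 * v i := by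
  ext i
  simp [BmatZ, mulVec, dotProduct, ite_mul, Finset.sum_ite, Finset.filter_eq, Finset.filter_ne,
    Finset.sum_erase_eq_sub]
  ring

theorem bformZ_self (N : ℕ) (v : Fin N → ℤ) : bformZ N v v = bquad v := by
  simp only [bformZ, BmatZ_mulVec, dotProduct, bquad, mul_sub, Finset.sum_sub_distrib,
    ← Finset.sum_mul, mul_left_comm _ (2 : ℤ), ← Finset.mul_sum, ← sq]

theorem transpose_Mmat_mulVec (N : ℕ) (j : Fin N) (v : Fin N → ℝ) :
    (Mmat N j)ᵀ *ᵥ v = reflect j v := by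
  ext i
  rcases eq_or_ne i j with rfl | hi
  · simp [Mmat, mulVec, dotProduct, reflect, ite_mul, Finset.sum_ite, Finset.filter_eq',
      Finset.filter_ne', Finset.sum_erase_eq_sub, Finset.mul_sum]
    ring
  · simp [Mmat, mulVec, dotProduct, reflect, hi, ite_mul]

theorem transpose_Mmat_mul_self (N : ℕ) (j : Fin N) : (Mmat N j)ᵀ * (Mmat N j)ᵀ = 1 := by
  rw [Matrix.ext_iff_mulVec]
  intro v
  rw [← Matrix.mulVec_mulVec, transpose_Mmat_mulVec, transpose_Mmat_mulVec, reflect_reflect,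
    Matrix.one_mulVec]

noncomputable def transposeMmatGL (N : ℕ) (j : Fin N) : GL (Fin N) ℝ :=
  ⟨(Mmat N j)ᵀ, (Mmat N j)ᵀ, transpose_Mmat_mul_self N j, transpose_Mmat_mul_self N j⟩

theorem transposeMmatGL_mem_Ggrp (N : ℕ) (j : Fin N) : transposeMmatGL N j ∈ Ggrp N :=
  Subgroup.subset_closure ⟨j, rfl⟩

/-- Every integral `b_N`-isotropic vector can be moved by an element of `G_N`
to a vector with at least one non-positive coordinate. -/
theorem stmt10 (N : ℕ) (hN : 3 ≤ N) (a : Fin N → ℤ) (hiso : bformZ N a a = 0) :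
    ∃ g ∈ Ggrp N, ∃ i : Fin N,
      ((g : Matrix (Fin N) (Fin N) ℝ).mulVec (fun k => (a k : ℝ))) i ≤ 0 := by
  rw [bformZ_self] at hiso
  induction hn : (∑ i, a i).toNat using Nat.strong_induction_on generalizing a with
  | _ n ih =>
  by_cases hnonpos : ∃ i, a i ≤ 0
  · obtain ⟨i, hi⟩ := hnonpos
    exact ⟨1, one_mem _, i, by simpa using hi⟩
  push Not at hnonpos
  have : Nonempty (Fin N) := ⟨⟨0, by omega⟩⟩
  obtain ⟨j, hmax⟩ := Finite.exists_max a
  have hlt := sum_reflect_lt_sum (by simpa using hN) hnonpos hiso hmax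
  have hpos : 0 < ∑ i, a i := Finset.sum_pos (fun i _ => hnonpos i) Finset.univ_nonempty
  obtain ⟨g, hg, i, hi⟩ := ih _ (by omega) (reflect j a) (by rwa [bquad_reflect]) rfl
  refine ⟨g * transposeMmatGL N j, mul_mem hg (transposeMmatGL_mem_Ggrp N j), i, ?_⟩
  rw [Units.val_mul, ← mulVec_mulVec, transposeMmatGL, Units.val_mk, transpose_Mmat_mulVec]
  have hcast : reflect j (fun k => (a k : ℝ)) = fun k => ((reflect j a k : ℤ) : ℝ) :=
    reflect_comp_ringHom (Int.castRingHom ℝ) j a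
  rwa [hcast]
end
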